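/- arXiv:2301.00232 — 5 statements merged into one kernel-verified Lean document; each statement's English description precedes it below -/
import Mathlib

section
/- A distributional objective f : Ξ^0 → ℝ is pseudo M♮-concave if and only if for every λ ∈ ℝ the upper contour set Ξ(f,λ) := {ξ ∈ Ξ^0 : f(ξ) ≥ λ} is M♮-convex. -/
variable {C T : Type*} [Fintype C] [Fintype T] [DecidableEq C] [DecidableEq T]

/-- The unit vector with a 1 in coordinate `(c, t)` and 0 elsewhere. -/
def chi (c : C) (t : T) : C × T → ℕ := fun p => if p = (c, t) then 1 else 0

/-- A distribution is feasible if each school's total is within its capacity. -/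
def Feasible (q : C → ℕ) (ξ : C × T → ℕ) : Prop := ∀ c, (∑ t, ξ (c, t)) ≤ q c

/-- M♮-convexity of a set of distributions. -/
def MNatConvex (Ξ : Set (C × T → ℕ)) : Prop :=
  ∀ ξ ξ', ξ ∈ Ξ → ξ' ∈ Ξ → ∀ c t, ξ' (c, t) < ξ (c, t) →
    ((ξ - chi c t) ∈ Ξ ∧ (ξ' + chi c t) ∈ Ξ) ∨
    ∃ c' t', ξ (c', t') < ξ' (c', t') ∧
      (ξ - chi c t + chi c' t') ∈ Ξ ∧ (ξ' + chi c t - chi c' t') ∈ Ξ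

/-- M-convexity of a set of distributions. -/
def MConvex (Ξ : Set (C × T → ℕ)) : Prop :=
  ∀ ξ ξ', ξ ∈ Ξ → ξ' ∈ Ξ → ∀ c t, ξ' (c, t) < ξ (c, t) →
    ∃ c' t', ξ (c', t') < ξ' (c', t') ∧
      (ξ - chi c t + chi c' t') ∈ Ξ ∧ (ξ' + chi c t - chi c' t') ∈ Ξ

/-- Pseudo M♮-concavity of a distributional objective (defined on feasible distributions). -/
def PseudoMNatConcave (q : C → ℕ) (f : (C × T → ℕ) → ℝ) : Prop :=
  ∀ ξ ξ', Feasible q ξ → Feasible q ξ' → ∀ c t, ξ' (c, t) < ξ (c, t) →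
    (Feasible q (ξ - chi c t) ∧ Feasible q (ξ' + chi c t) ∧
      min (f ξ) (f ξ') ≤ min (f (ξ - chi c t)) (f (ξ' + chi c t))) ∨
    ∃ c' t', ξ (c', t') < ξ' (c', t') ∧
      Feasible q (ξ - chi c t + chi c' t') ∧ Feasible q (ξ' + chi c t - chi c' t') ∧
      min (f ξ) (f ξ') ≤ min (f (ξ - chi c t + chi c' t')) (f (ξ' + chi c t - chi c' t'))

/-- `f` is pseudo M♮-concave iff all upper contour sets are M♮-convex. -/
theorem pseudoMNatConcave_iff_upperContour (q : C → ℕ) (f : (C × T → ℕ) → ℝ) :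
    PseudoMNatConcave q f ↔
      ∀ lam : ℝ, MNatConvex {ξ : C × T → ℕ | Feasible q ξ ∧ lam ≤ f ξ} := by
  constructor
  · intro h lam ξ ξ' hξ hξ' c t hlt
    obtain ⟨hf, hl⟩ := hξ
    obtain ⟨hf', hl'⟩ := hξ'
    have hmin : lam ≤ min (f ξ) (f ξ') := le_min hl hl'
    rcases h ξ ξ' hf hf' c t hlt with ⟨h1, h2, h3⟩ | ⟨c', t', hlt', h1, h2, h3⟩
    · exact Or.inl ⟨⟨h1, hmin.trans (h3.trans (min_le_left _ _))⟩,
        ⟨h2, hmin.trans (h3.trans (min_le_right _ _))⟩⟩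
    · exact Or.inr ⟨c', t', hlt', ⟨h1, hmin.trans (h3.trans (min_le_left _ _))⟩,
        ⟨h2, hmin.trans (h3.trans (min_le_right _ _))⟩⟩
  · intro h ξ ξ' hf hf' c t hlt
    rcases h (min (f ξ) (f ξ')) ξ ξ' ⟨hf, min_le_left _ _⟩ ⟨hf', min_le_right _ _⟩ c t hlt
      with ⟨⟨h1, h1'⟩, ⟨h2, h2'⟩⟩ | ⟨c', t', hlt', ⟨h1, h1'⟩, ⟨h2, h2'⟩⟩
    · exact Or.inl ⟨h1, h2, le_min h1' h2'⟩
    · exact Or.inr ⟨c', t', hlt', h1, h2, le_min h1' h2'⟩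
end

section
/- A policy goal Ξ ⊆ Ξ^0 is M♮-convex if and only if the indicator objective f_D^Ξ, defined by f_D^Ξ(ξ) = 1 if ξ ∈ Ξ and f_D^Ξ(ξ) = 0 if ξ ∈ Ξ^0 \ Ξ, is pseudo M♮-concave. -/
variable {C T : Type*} [Fintype C] [Fintype T] [DecidableEq C] [DecidableEq T]

lemma chi_apply_same (c : C) (t : T) (s : T) : chi c t (c, s) = if s = t then 1 else 0 := by
  simp [chi, Prod.ext_iff]

lemma chi_apply_other {c a : C} (h : a ≠ c) (t s : T) : chi c t (a, s) = 0 := by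
  simp [chi, Prod.ext_iff, h]

lemma sum_chi_same (c : C) (t : T) : ∑ s, chi c t (c, s) = 1 := by
  simp [chi_apply_same]

lemma feasible_sub {q : C → ℕ} {ξ : C × T → ℕ} (g : C × T → ℕ) (h : Feasible q ξ) :
    Feasible q (ξ - g) := by
  intro c
  refine le_trans (Finset.sum_le_sum fun s _ => ?_) (h c)
  exact Nat.sub_le _ _

lemma feasible_exch_A {q : C → ℕ} {ξ : C × T → ℕ} {c : C} {t t' : T}
    (h : Feasible q ξ) (h1 : 1 ≤ ξ (c, t)) (hne : t' ≠ t) :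
    Feasible q (ξ - chi c t + chi c t') := by
  intro a
  by_cases ha : a = c
  · subst ha
    have hpt : ∀ s ∈ Finset.univ, chi a t (a, s) ≤ ξ (a, s) := by
      intro s _
      rw [chi_apply_same]
      split
      · next hs => subst hs; exact h1
      · exact Nat.zero_le _
    have hsum : ∑ s, (ξ - chi a t + chi a t') (a, s)
        = ((∑ s, ξ (a, s)) - ∑ s, chi a t (a, s)) + ∑ s, chi a t' (a, s) :=
      calc ∑ s, (ξ - chi a t + chi a t') (a, s)
          = ∑ s, ((ξ (a, s) - chi a t (a, s)) + chi a t' (a, s)) := rfl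
        _ = (∑ s, (ξ (a, s) - chi a t (a, s))) + ∑ s, chi a t' (a, s) :=
            Finset.sum_add_distrib
        _ = ((∑ s, ξ (a, s)) - ∑ s, chi a t (a, s)) + ∑ s, chi a t' (a, s) := by
            rw [Finset.sum_tsub_distrib _ hpt]
    rw [hsum, sum_chi_same, sum_chi_same]
    have hle : ξ (a, t) ≤ ∑ s, ξ (a, s) :=
      Finset.single_le_sum (f := fun s => ξ (a, s)) (fun s _ => Nat.zero_le _)
        (Finset.mem_univ t)
    have := h a
    omega
  · have : ∀ s, (ξ - chi c t + chi c t') (a, s) = ξ (a, s) := by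
      intro s
      show ξ (a, s) - chi c t (a, s) + chi c t' (a, s) = ξ (a, s)
      rw [chi_apply_other ha, chi_apply_other ha]
      omega
    calc ∑ s, (ξ - chi c t + chi c t') (a, s) = ∑ s, ξ (a, s) := by
          exact Finset.sum_congr rfl fun s _ => this s
      _ ≤ q a := h a

lemma feasible_exch_B {q : C → ℕ} {ξ' : C × T → ℕ} {c : C} {t t' : T}
    (h : Feasible q ξ') (h1 : 1 ≤ ξ' (c, t')) (hne : t' ≠ t) :
    Feasible q (ξ' + chi c t - chi c t') := by
  intro a
  by_cases ha : a = c
  · subst ha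
    have hpt : ∀ s ∈ Finset.univ, chi a t' (a, s) ≤ ξ' (a, s) + chi a t (a, s) := by
      intro s _
      rw [chi_apply_same]
      split
      · next hs => subst hs; exact le_trans h1 (Nat.le_add_right _ _)
      · exact Nat.zero_le _
    have hsum : ∑ s, (ξ' + chi a t - chi a t') (a, s)
        = ((∑ s, ξ' (a, s)) + ∑ s, chi a t (a, s)) - ∑ s, chi a t' (a, s) :=
      calc ∑ s, (ξ' + chi a t - chi a t') (a, s)
          = ∑ s, ((ξ' (a, s) + chi a t (a, s)) - chi a t' (a, s)) := rfl
        _ = (∑ s, (ξ' (a, s) + chi a t (a, s))) - ∑ s, chi a t' (a, s) :=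
            Finset.sum_tsub_distrib _ hpt
        _ = ((∑ s, ξ' (a, s)) + ∑ s, chi a t (a, s)) - ∑ s, chi a t' (a, s) := by
            rw [Finset.sum_add_distrib]
    rw [hsum, sum_chi_same, sum_chi_same]
    have := h a
    omega
  · have : ∀ s, (ξ' + chi c t - chi c t') (a, s) = ξ' (a, s) := by
      intro s
      show ξ' (a, s) + chi c t (a, s) - chi c t' (a, s) = ξ' (a, s)
      rw [chi_apply_other ha, chi_apply_other ha]
      omega
    calc ∑ s, (ξ' + chi c t - chi c t') (a, s) = ∑ s, ξ' (a, s) := by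
          exact Finset.sum_congr rfl fun s _ => this s
      _ ≤ q a := h a

/-- `Ξ` is M♮-convex iff its indicator objective is pseudo M♮-concave. -/
theorem mnatConvex_iff_indicator_pseudoMNatConcave (q : C → ℕ) (Ξ : Set (C × T → ℕ))
    (hsub : Ξ ⊆ {ξ | Feasible q ξ}) :
    MNatConvex Ξ ↔ PseudoMNatConcave q (Ξ.indicator (fun _ => (1 : ℝ))) := by
  set f := Ξ.indicator (fun _ => (1 : ℝ)) with hf
  have hnn : ∀ x, 0 ≤ f x := fun x => Set.indicator_nonneg (fun _ _ => zero_le_one) x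
  constructor
  · intro hM ξ ξ' hξ hξ' c t hct
    by_cases hmem : ξ ∈ Ξ ∧ ξ' ∈ Ξ
    · obtain ⟨h1, h2⟩ := hmem
      rcases hM ξ ξ' h1 h2 c t hct with ⟨m1, m2⟩ | ⟨c', t', hlt, m1, m2⟩
      · left
        refine ⟨hsub m1, hsub m2, ?_⟩
        simp [hf, Set.indicator_of_mem, h1, h2, m1, m2]
      · right
        refine ⟨c', t', hlt, hsub m1, hsub m2, ?_⟩
        simp [hf, Set.indicator_of_mem, h1, h2, m1, m2]
    · have hmin : min (f ξ) (f ξ') ≤ 0 := by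
        rcases not_and_or.mp hmem with h | h
        · exact min_le_of_left_le (le_of_eq (Set.indicator_of_notMem h _))
        · exact min_le_of_right_le (le_of_eq (Set.indicator_of_notMem h _))
      by_cases hfeas : Feasible q (ξ' + chi c t)
      · exact Or.inl ⟨feasible_sub _ hξ, hfeas, hmin.trans (le_min (hnn _) (hnn _))⟩
      · have hqc : q c ≤ ∑ s, ξ' (c, s) := by
          by_contra hq
          apply hfeas
          intro a
          by_cases ha : a = c
          · subst ha
            have : ∑ s, (ξ' + chi a t) (a, s) = (∑ s, ξ' (a, s)) + ∑ s, chi a t (a, s) := by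
              rw [← Finset.sum_add_distrib]; rfl
            rw [this, sum_chi_same]
            omega
          · have : ∀ s, (ξ' + chi c t) (a, s) = ξ' (a, s) := by
              intro s
              show ξ' (a, s) + chi c t (a, s) = ξ' (a, s)
              rw [chi_apply_other ha]
              omega
            calc ∑ s, (ξ' + chi c t) (a, s) = ∑ s, ξ' (a, s) :=
                  Finset.sum_congr rfl fun s _ => this s
              _ ≤ q a := hξ' a
        have hsum : ∑ s, ξ (c, s) ≤ ∑ s, ξ' (c, s) := (hξ c).trans hqc
        have hex : ∃ t', ξ (c, t') < ξ' (c, t') := by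
          by_contra hall
          push_neg at hall
          have : ∑ s, ξ' (c, s) < ∑ s, ξ (c, s) :=
            Finset.sum_lt_sum (fun s _ => hall s) ⟨t, Finset.mem_univ t, hct⟩
          omega
        obtain ⟨t', hlt⟩ := hex
        have hne : t' ≠ t := by
          intro h; subst h; omega
        right
        exact ⟨c, t', hlt,
          feasible_exch_A hξ (by omega) hne,
          feasible_exch_B hξ' (by omega) hne,
          hmin.trans (le_min (hnn _) (hnn _))⟩
  · intro hP ξ ξ' hξ hξ' c t hct
    have mem_of : ∀ x, (1 : ℝ) ≤ f x → x ∈ Ξ := by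
      intro x hx
      by_contra h
      rw [hf, Set.indicator_of_notMem h] at hx
      linarith
    have h1 : f ξ = 1 := Set.indicator_of_mem hξ _
    have h2 : f ξ' = 1 := Set.indicator_of_mem hξ' _
    rcases hP ξ ξ' (hsub hξ) (hsub hξ') c t hct with ⟨_, _, hmin⟩ | ⟨c', t', hlt, _, _, hmin⟩
    · rw [h1, h2, min_self] at hmin
      exact Or.inl ⟨mem_of _ (hmin.trans (min_le_left _ _)),
        mem_of _ (hmin.trans (min_le_right _ _))⟩
    · rw [h1, h2, min_self] at hmin
      exact Or.inr ⟨c', t', hlt, mem_of _ (hmin.trans (min_le_left _ _)),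
        mem_of _ (hmin.trans (min_le_right _ _))⟩
end

section
/- There exists an M♮-convex set Ξ such that the negative Manhattan distance objective f_M^Ξ(ξ) := -min_{ξ'∈Ξ} Σ_coordinates |ξ - ξ'| fails pseudo M♮-concavity. Concretely, in ℕ² with one school of capacity at least 4 and two types, Ξ = {(1,1),(2,1)} is M♮-convex, yet for ξ = (3,1) and ξ̃ = (2,0) (which satisfy ξ₁ > ξ̃₁), the only admissible move is subtracting e₁ from ξ and adding e₁ to ξ̃, giving f_M^Ξ(2,1) = 0 and f_M^Ξ(3,0) = -2, so min{0, -2} = -2 < -1 = min{f_M^Ξ(ξ), f_M^Ξ(ξ̃)}. -/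
variable {ι : Type*} [Fintype ι] [DecidableEq ι]

/-- The `i`-th unit vector. -/
def uvec (i : ι) : ι → ℕ := fun j => if j = i then 1 else 0

/-- M♮-convexity of a set of vectors in `ℕ^ι`. -/
def MNatConvexI (Ξ : Set (ι → ℕ)) : Prop :=
  ∀ ξ ξ', ξ ∈ Ξ → ξ' ∈ Ξ → ∀ i, ξ' i < ξ i →
    ((ξ - uvec i) ∈ Ξ ∧ (ξ' + uvec i) ∈ Ξ) ∨
    ∃ j, ξ j < ξ' j ∧ (ξ - uvec i + uvec j) ∈ Ξ ∧ (ξ' + uvec i - uvec j) ∈ Ξ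

/-- M-convexity of a set of vectors in `ℕ^ι`. -/
def MConvexI (Ξ : Set (ι → ℕ)) : Prop :=
  ∀ ξ ξ', ξ ∈ Ξ → ξ' ∈ Ξ → ∀ i, ξ' i < ξ i →
    ∃ j, ξ j < ξ' j ∧ (ξ - uvec i + uvec j) ∈ Ξ ∧ (ξ' + uvec i - uvec j) ∈ Ξ

/-- Pseudo M♮-concavity of `f` relative to a feasible set `Ξ0`. -/
def PseudoMNatConcaveI (Ξ0 : Set (ι → ℕ)) (f : (ι → ℕ) → ℝ) : Prop :=
  ∀ ξ ξ', ξ ∈ Ξ0 → ξ' ∈ Ξ0 → ∀ i, ξ' i < ξ i →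
    ((ξ - uvec i) ∈ Ξ0 ∧ (ξ' + uvec i) ∈ Ξ0 ∧
      min (f ξ) (f ξ') ≤ min (f (ξ - uvec i)) (f (ξ' + uvec i))) ∨
    ∃ j, ξ j < ξ' j ∧ (ξ - uvec i + uvec j) ∈ Ξ0 ∧ (ξ' + uvec i - uvec j) ∈ Ξ0 ∧
      min (f ξ) (f ξ') ≤ min (f (ξ - uvec i + uvec j)) (f (ξ' + uvec i - uvec j))

/-- Manhattan distance on `ℕ^ι`. -/
def distM (ξ ξ' : ι → ℕ) : ℕ := ∑ i, max (ξ i - ξ' i) (ξ' i - ξ i)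

/-- Negative Manhattan distance to a set. -/
noncomputable def fM (Ξ : Set (ι → ℕ)) (ξ : ι → ℕ) : ℝ :=
  -(sInf ((fun ξ' => distM ξ ξ') '' Ξ) : ℕ)

lemma fM_pair (a b ξ : Fin 2 → ℕ) :
    fM ({a, b} : Set (Fin 2 → ℕ)) ξ = -((min (distM ξ a) (distM ξ b) : ℕ) : ℝ) := by
  simp [fM, Set.image_pair, csInf_pair]

/-- `Ξ = {(1,1),(2,1)}` is M♮-convex but the negative Manhattan
distance objective fails pseudo M♮-concavity (with the witnessing values). -/
theorem manhattan_not_pseudoMNatConcave (q : ℕ) (hq : 4 ≤ q) :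
    MNatConvexI ({![1, 1], ![2, 1]} : Set (Fin 2 → ℕ)) ∧
    ¬ PseudoMNatConcaveI {v : Fin 2 → ℕ | v 0 + v 1 ≤ q}
        (fM ({![1, 1], ![2, 1]} : Set (Fin 2 → ℕ))) ∧
    fM ({![1, 1], ![2, 1]} : Set (Fin 2 → ℕ)) ![3, 1] = -1 ∧
    fM ({![1, 1], ![2, 1]} : Set (Fin 2 → ℕ)) ![2, 0] = -1 ∧
    fM ({![1, 1], ![2, 1]} : Set (Fin 2 → ℕ)) ![2, 1] = 0 ∧
    fM ({![1, 1], ![2, 1]} : Set (Fin 2 → ℕ)) ![3, 0] = -2 := by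
  have v31 : fM ({![1, 1], ![2, 1]} : Set (Fin 2 → ℕ)) ![3, 1] = -1 := by
    rw [fM_pair]
    norm_num [show distM ![3,1] ![1,1] = 2 from by decide,
      show distM ![3,1] ![2,1] = 1 from by decide]
  have v20 : fM ({![1, 1], ![2, 1]} : Set (Fin 2 → ℕ)) ![2, 0] = -1 := by
    rw [fM_pair]
    norm_num [show distM ![2,0] ![1,1] = 2 from by decide,
      show distM ![2,0] ![2,1] = 1 from by decide]
  have v21 : fM ({![1, 1], ![2, 1]} : Set (Fin 2 → ℕ)) ![2, 1] = 0 := by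
    rw [fM_pair]
    norm_num [show distM ![2,1] ![1,1] = 1 from by decide,
      show distM ![2,1] ![2,1] = 0 from by decide]
  have v30 : fM ({![1, 1], ![2, 1]} : Set (Fin 2 → ℕ)) ![3, 0] = -2 := by
    rw [fM_pair]
    norm_num [show distM ![3,0] ![1,1] = 3 from by decide,
      show distM ![3,0] ![2,1] = 2 from by decide]
  refine ⟨?_, ?_, v31, v20, v21, v30⟩
  · intro ξ ξ' hξ hξ' i hi
    rcases hξ with rfl | rfl <;> rcases hξ' with rfl | rfl
    · exact absurd hi (lt_irrefl _)
    · exfalso; fin_cases i <;> simp at hi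
    · left
      refine ⟨?_, ?_⟩
      · rw [show (![2,1] : Fin 2 → ℕ) - uvec i = ![1,1] from ?_]
        · left; rfl
        · fin_cases i
          · decide
          · exfalso; revert hi; decide
      · rw [show (![1,1] : Fin 2 → ℕ) + uvec i = ![2,1] from ?_]
        · right; rfl
        · fin_cases i
          · decide
          · exfalso; revert hi; decide
    · exact absurd hi (lt_irrefl _)
  · intro h
    have m1 : (![3,1] : Fin 2 → ℕ) ∈ {v : Fin 2 → ℕ | v 0 + v 1 ≤ q} := by
      simp only [Set.mem_setOf_eq, Matrix.cons_val_zero, Matrix.cons_val_one, Matrix.head_cons]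
      omega
    have m2 : (![2,0] : Fin 2 → ℕ) ∈ {v : Fin 2 → ℕ | v 0 + v 1 ≤ q} := by
      simp only [Set.mem_setOf_eq, Matrix.cons_val_zero, Matrix.cons_val_one, Matrix.head_cons]
      omega
    have hlt : (![2,0] : Fin 2 → ℕ) 0 < (![3,1] : Fin 2 → ℕ) 0 := by decide
    rcases h ![3,1] ![2,0] m1 m2 0 hlt with ⟨_, _, hle⟩ | ⟨j, hj, _⟩
    · rw [show (![3,1] : Fin 2 → ℕ) - uvec 0 = ![2,1] from by decide,
        show (![2,0] : Fin 2 → ℕ) + uvec 0 = ![3,0] from by decide,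
        v31, v20, v21, v30] at hle
      norm_num at hle
    · exfalso; revert hj; fin_cases j <;> decide
end

section
/- The school-level quota policy set Ξ^Q = {ξ ∈ Ξ^0 : ∀c ∈ C, l_c ≤ Σ_t ξ_c^t ≤ u_c} is M♮-convex, where l_c ≤ u_c are natural-number floors and ceilings for each school. -/
variable {C T : Type*} [Fintype C] [Fintype T] [DecidableEq C] [DecidableEq T]

lemma sum_chi (c c'' : C) (t : T) : ∑ s : T, chi c t (c'', s) = if c'' = c then 1 else 0 := by
  unfold chi
  by_cases h : c'' = c
  · subst h
    simp [Prod.ext_iff]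
  · simp [Prod.ext_iff, h]

lemma chi_le {ξ : C × T → ℕ} {c : C} {t : T} (h : 1 ≤ ξ (c, t)) : ∀ p, chi c t p ≤ ξ p := by
  intro p
  unfold chi
  split
  · next heq => subst heq; exact h
  · exact Nat.zero_le _

lemma sum_sub_chi {ξ : C × T → ℕ} {c : C} {t : T} (h : 1 ≤ ξ (c, t)) (c'' : C) :
    ∑ s : T, (ξ - chi c t) (c'', s) = (∑ s : T, ξ (c'', s)) - (if c'' = c then 1 else 0) := by
  have : ∀ s : T, (ξ - chi c t) (c'', s) = ξ (c'', s) - chi c t (c'', s) := fun s => rfl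
  simp_rw [this]
  rw [Finset.sum_tsub_distrib _ (fun s _ => chi_le h (c'', s)), sum_chi]

lemma sum_add_chi (ξ : C × T → ℕ) (c : C) (t : T) (c'' : C) :
    ∑ s : T, (ξ + chi c t) (c'', s) = (∑ s : T, ξ (c'', s)) + (if c'' = c then 1 else 0) := by
  have : ∀ s : T, (ξ + chi c t) (c'', s) = ξ (c'', s) + chi c t (c'', s) := fun s => rfl
  simp_rw [this]
  rw [Finset.sum_add_distrib, sum_chi]

/-- The school-level quota policy set is M♮-convex. -/
theorem quota_policy_mnatConvex (q l u : C → ℕ) (hlu : ∀ c, l c ≤ u c) :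
    MNatConvex {ξ : C × T → ℕ | Feasible q ξ ∧
      ∀ c, l c ≤ (∑ t, ξ (c, t)) ∧ (∑ t, ξ (c, t)) ≤ u c} := by
  intro ξ ξ' hξ hξ' c t hlt
  obtain ⟨hfq, hb⟩ := hξ
  obtain ⟨hfq', hb'⟩ := hξ'
  have h1 : 1 ≤ ξ (c, t) := by omega
  have hξS : ξ (c, t) ≤ ∑ s : T, ξ (c, s) :=
    Finset.single_le_sum (f := fun s => ξ (c, s)) (fun i _ => Nat.zero_le _) (Finset.mem_univ t)
  by_cases hcase : l c < ∑ s : T, ξ (c, s) ∧ (∑ s : T, ξ' (c, s)) < u c ∧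
      (∑ s : T, ξ' (c, s)) < q c
  · left
    refine ⟨⟨?_, ?_⟩, ?_, ?_⟩
    · intro c''
      rw [sum_sub_chi h1]
      have := hfq c''
      omega
    · intro c''
      rw [sum_sub_chi h1]
      have := hb c''
      by_cases hc : c'' = c
      · subst hc; rw [if_pos rfl]; omega
      · rw [if_neg hc]; omega
    · intro c''
      rw [sum_add_chi]
      have := hfq' c''
      by_cases hc : c'' = c
      · subst hc; rw [if_pos rfl]; omega
      · rw [if_neg hc]; omega
    · intro c''
      rw [sum_add_chi]
      have := hb' c''
      by_cases hc : c'' = c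
      · subst hc; rw [if_pos rfl]; omega
      · rw [if_neg hc]; omega
  · right
    have hle : (∑ s : T, ξ (c, s)) ≤ ∑ s : T, ξ' (c, s) := by
      have h2 := hb c
      have h3 := hb' c
      have h4 := hfq c
      have h5 := hfq' c
      omega
    have hex : ∃ t', ξ (c, t') < ξ' (c, t') := by
      by_contra hno
      push_neg at hno
      have : (∑ s : T, ξ' (c, s)) < ∑ s : T, ξ (c, s) :=
        Finset.sum_lt_sum (fun i _ => hno i) ⟨t, Finset.mem_univ t, hlt⟩
      omega
    obtain ⟨t', ht'⟩ := hex
    have h1' : 1 ≤ ξ' (c, t') := by omega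
    refine ⟨c, t', ht', ⟨?_, ?_⟩, ?_, ?_⟩
    · intro c''
      rw [sum_add_chi, sum_sub_chi h1]
      have := hfq c''
      by_cases hc : c'' = c
      · subst hc; rw [if_pos rfl]; omega
      · rw [if_neg hc]; omega
    · intro c''
      rw [sum_add_chi, sum_sub_chi h1]
      have := hb c''
      by_cases hc : c'' = c
      · subst hc; rw [if_pos rfl]; omega
      · rw [if_neg hc]; omega
    · have hle' : 1 ≤ (ξ' + chi c t) (c, t') := by
        have : (ξ' + chi c t) (c, t') = ξ' (c, t') + chi c t (c, t') := rfl
        rw [this]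
        omega
      intro c''
      rw [sum_sub_chi hle', sum_add_chi]
      have := hfq' c''
      by_cases hc : c'' = c
      · subst hc; rw [if_pos rfl]; omega
      · rw [if_neg hc]; omega
    · have hle' : 1 ≤ (ξ' + chi c t) (c, t') := by
        have : (ξ' + chi c t) (c, t') = ξ' (c, t') + chi c t (c, t') := rfl
        rw [this]
        omega
      intro c''
      rw [sum_sub_chi hle', sum_add_chi]
      have := hb' c''
      by_cases hc : c'' = c
      · subst hc; rw [if_pos rfl]; omega
      · rw [if_neg hc]; omega
end

section
/- The exchange-feasibility policy set Ξ^E = {ξ ∈ Ξ^0 : ∀d ∈ D, Σ_{t, c : d(c)=d} ξ_c^t ≥ k_d} is M♮-convex, for any district assignment d : C → D and thresholds k : D → ℕ. -/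
variable {C T : Type*} [Fintype C] [Fintype T] [DecidableEq C] [DecidableEq T]

open Finset

lemma chi_le_of_pos {ξ : C × T → ℕ} {c : C} {t : T} (h : 1 ≤ ξ (c, t)) :
    chi c t ≤ ξ := by
  intro p
  by_cases hp : p = (c, t)
  · subst hp; simpa [chi] using h
  · simp [chi, hp]

lemma rowS_add (ξ δ : C × T → ℕ) (c : C) :
    ∑ t, (ξ + δ) (c, t) = (∑ t, ξ (c, t)) + ∑ t, δ (c, t) := by
  simp [Finset.sum_add_distrib]

lemma rowS_sub (ξ δ : C × T → ℕ) (c : C) (h : δ ≤ ξ) :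
    ∑ t, (ξ - δ) (c, t) = (∑ t, ξ (c, t)) - ∑ t, δ (c, t) := by
  simpa using Finset.sum_tsub_distrib (univ : Finset T) (fun t _ => h (c, t))

lemma rowS_chi (c c' : C) (t : T) :
    ∑ t', chi c t (c', t') = if c' = c then 1 else 0 := by
  by_cases h : c' = c
  · subst h; simp [chi, Prod.ext_iff]
  · simp [chi, Prod.ext_iff, h]

section Dist
variable {D : Type*} [Fintype D] [DecidableEq D]

lemma distN_add (dmap : C → D) (ξ δ : C × T → ℕ) (d : D) :
    ∑ c ∈ univ.filter (fun c => dmap c = d), ∑ t, (ξ + δ) (c, t)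
      = (∑ c ∈ univ.filter (fun c => dmap c = d), ∑ t, ξ (c, t))
        + ∑ c ∈ univ.filter (fun c => dmap c = d), ∑ t, δ (c, t) := by
  simp [rowS_add, Finset.sum_add_distrib]

lemma distN_sub (dmap : C → D) (ξ δ : C × T → ℕ) (d : D) (h : δ ≤ ξ) :
    ∑ c ∈ univ.filter (fun c => dmap c = d), ∑ t, (ξ - δ) (c, t)
      = (∑ c ∈ univ.filter (fun c => dmap c = d), ∑ t, ξ (c, t))
        - ∑ c ∈ univ.filter (fun c => dmap c = d), ∑ t, δ (c, t) := by
  rw [Finset.sum_congr rfl (fun c _ => rowS_sub ξ δ c h)]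
  exact Finset.sum_tsub_distrib _ (fun c _ => Finset.sum_le_sum (fun t _ => h (c, t)))

lemma distN_chi (dmap : C → D) (c : C) (t : T) (d : D) :
    ∑ c' ∈ univ.filter (fun c' => dmap c' = d), ∑ t', chi c t (c', t')
      = if dmap c = d then 1 else 0 := by
  rw [Finset.sum_congr rfl (fun c' _ => rowS_chi c c' t)]
  simp [Finset.sum_ite_eq', Finset.mem_filter]

end Dist

/-- The exchange-feasibility policy set is M♮-convex. -/
theorem exchange_feasibility_mnatConvex {D : Type*} [Fintype D] [DecidableEq D]
    (q : C → ℕ) (dmap : C → D) (k : D → ℕ) :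
    MNatConvex {ξ : C × T → ℕ | Feasible q ξ ∧
      ∀ d' : D, k d' ≤ ∑ c ∈ Finset.univ.filter (fun c => dmap c = d'), ∑ t, ξ (c, t)} := by
  intro ξ ξ' hξ hξ' c t hlt
  obtain ⟨hf, hd⟩ := hξ
  obtain ⟨hf', hd'⟩ := hξ'
  have hpos : 1 ≤ ξ (c, t) := by omega
  have hchile : chi c t ≤ ξ := chi_le_of_pos hpos
  have hle_self_add : (ξ' : C × T → ℕ) ≤ ξ' + chi c t := fun p => Nat.le_add_right _ _
  by_cases hA : ∃ t', ξ (c, t') < ξ' (c, t')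
  · obtain ⟨t', ht'⟩ := hA
    right
    have hle2 : chi c t' ≤ ξ' + chi c t :=
      le_trans (chi_le_of_pos (show 1 ≤ ξ' (c, t') by omega)) hle_self_add
    have hrow : ∀ c'', ∑ u, (ξ - chi c t + chi c t') (c'', u) = ∑ u, ξ (c'', u) := by
      intro c''
      rw [rowS_add, rowS_sub _ _ _ hchile, rowS_chi, rowS_chi]
      by_cases h : c'' = c
      · have h1 : 1 ≤ ∑ u, ξ (c'', u) := by
          rw [h]
          exact le_trans hpos
            (Finset.single_le_sum (f := fun u => ξ (c, u)) (fun u _ => Nat.zero_le _)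
              (Finset.mem_univ t))
        simp only [if_pos h]
        omega
      · simp [h]
    have hrow' : ∀ c'', ∑ u, (ξ' + chi c t - chi c t') (c'', u) = ∑ u, ξ' (c'', u) := by
      intro c''
      rw [rowS_sub _ _ _ hle2, rowS_add, rowS_chi, rowS_chi]
      by_cases h : c'' = c <;> simp [h]
    refine ⟨c, t', ht', ⟨?_, ?_⟩, ?_, ?_⟩
    · intro c''; rw [hrow]; exact hf c''
    · intro d; rw [Finset.sum_congr rfl (fun c'' _ => hrow c'')]; exact hd d
    · intro c''; rw [hrow']; exact hf' c''
    · intro d; rw [Finset.sum_congr rfl (fun c'' _ => hrow' c'')]; exact hd' d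
  · push_neg at hA
    have hSlt : ∑ u, ξ' (c, u) < ∑ u, ξ (c, u) :=
      Finset.sum_lt_sum (fun u _ => hA u) ⟨t, Finset.mem_univ t, hlt⟩
    have hfeas_add : Feasible q (ξ' + chi c t) := by
      intro c''
      rw [rowS_add, rowS_chi]
      by_cases h : c'' = c
      · rw [if_pos h, h]; have := hf c; omega
      · simp only [if_neg h]; simpa using hf' c''
    by_cases hB : k (dmap c) <
        ∑ c'' ∈ univ.filter (fun c'' => dmap c'' = dmap c), ∑ u, ξ (c'', u)
    · left
      refine ⟨⟨?_, ?_⟩, hfeas_add, ?_⟩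
      · intro c''
        rw [rowS_sub _ _ _ hchile]
        exact le_trans (Nat.sub_le _ _) (hf c'')
      · intro d
        rw [distN_sub dmap ξ _ d hchile, distN_chi]
        by_cases h : dmap c = d
        · rw [if_pos h]; rw [h] at hB; omega
        · simp only [if_neg h]; simpa using hd d
      · intro d
        rw [distN_add, distN_chi]
        exact le_trans (hd' d) (Nat.le_add_right _ _)
    · have hNle : ∑ c'' ∈ univ.filter (fun c'' => dmap c'' = dmap c), ∑ u, ξ (c'', u)
          ≤ ∑ c'' ∈ univ.filter (fun c'' => dmap c'' = dmap c), ∑ u, ξ' (c'', u) :=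
        le_trans (not_lt.mp hB) (hd' (dmap c))
      have hex : ∃ c', dmap c' = dmap c ∧ c' ≠ c ∧ ∑ u, ξ (c', u) < ∑ u, ξ' (c', u) := by
        by_contra hcon
        push_neg at hcon
        have hlt2 : ∑ c'' ∈ univ.filter (fun c'' => dmap c'' = dmap c), ∑ u, ξ' (c'', u)
            < ∑ c'' ∈ univ.filter (fun c'' => dmap c'' = dmap c), ∑ u, ξ (c'', u) := by
          apply Finset.sum_lt_sum
          · intro c'' hc''
            rcases eq_or_ne c'' c with rfl | hne
            · exact hSlt.le
            · exact hcon c'' (Finset.mem_filter.mp hc'').2 hne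
          · exact ⟨c, Finset.mem_filter.mpr ⟨Finset.mem_univ c, rfl⟩, hSlt⟩
        omega
      obtain ⟨c', hdc', hne, hSlt'⟩ := hex
      have hex2 : ∃ t', ξ (c', t') < ξ' (c', t') := by
        by_contra h
        push_neg at h
        exact absurd (Finset.sum_le_sum fun u _ => h u) (not_le.mpr hSlt')
      obtain ⟨t', ht'⟩ := hex2
      have hle3 : chi c' t' ≤ ξ' + chi c t :=
        le_trans (chi_le_of_pos (show 1 ≤ ξ' (c', t') by omega)) hle_self_add
      right
      refine ⟨c', t', ht', ⟨?_, ?_⟩, ?_, ?_⟩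
      · intro c''
        rw [rowS_add, rowS_sub _ _ _ hchile, rowS_chi, rowS_chi]
        rcases eq_or_ne c'' c with rfl | h1
        · have := hf c''; simp only [eq_self_iff_true, if_true, if_neg hne.symm]; omega
        · rcases eq_or_ne c'' c' with rfl | h2
          · have := hf' c''; have := hSlt'; simp only [if_neg h1, eq_self_iff_true, if_true]; omega
          · have := hf c''; simp only [if_neg h1, if_neg h2]; omega
      · intro d
        rw [distN_add, distN_sub dmap ξ _ d hchile, distN_chi, distN_chi, hdc']
        have := hd d
        by_cases h : dmap c = d
        · rw [if_pos h]; omega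
        · rw [if_neg h]; omega
      · intro c''
        rw [rowS_sub _ _ _ hle3, rowS_add, rowS_chi, rowS_chi]
        rcases eq_or_ne c'' c with rfl | h1
        · have := hf c''; have := hSlt; simp only [eq_self_iff_true, if_true, if_neg hne.symm]; omega
        · rcases eq_or_ne c'' c' with rfl | h2
          · have := hf' c''; simp only [if_neg h1, eq_self_iff_true, if_true]; omega
          · have := hf' c''; simp only [if_neg h1, if_neg h2]; omega
      · intro d
        rw [distN_sub _ _ _ _ hle3, distN_add, distN_chi, distN_chi, hdc']
        have := hd' d
        by_cases h : dmap c = d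
        · rw [if_pos h]; omega
        · rw [if_neg h]; omega
end
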